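/- Let X : Ω → ℝⁿ and ε : Ω → ℝⁿ be square-integrable random vectors on a probability space, with X and ε independent and E[ε] = 0. Let Γ_X = E[X Xᵀ] and Γ_ε = E[ε εᵀ]. Then the Wiener smoothing matrix Â = Γ_X (Γ_X + Γ_ε)† attains the global minimum of the denoising Bayes risk: for every A ∈ ℝ^{n×n}, E‖Â (X + ε) − X‖₂² ≤ E‖A (X + ε) − X‖₂². -/

import Mathlib

open Matrix MeasureTheory

/-- Second (cross-)moment matrix `E[X Yᵀ]` of two random vectors. -/
noncomputable def secondMoment {Ω : Type} [MeasurableSpace Ω] (μ : Measure Ω)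
    {n m : ℕ} (X : Ω → Fin n → ℝ) (Y : Ω → Fin m → ℝ) : Matrix (Fin n) (Fin m) ℝ :=
  Matrix.of fun i j => ∫ ω, X ω i * Y ω j ∂μ

/-- `Ad` is the Moore–Penrose pseudoinverse of `A` (the four Penrose conditions). -/
def IsMoorePenrose {m n : ℕ} (A : Matrix (Fin m) (Fin n) ℝ)
    (Ad : Matrix (Fin n) (Fin m) ℝ) : Prop :=
  A * Ad * A = A ∧ Ad * A * Ad = Ad ∧ (A * Ad)ᵀ = A * Ad ∧ (Ad * A)ᵀ = Ad * A

/-!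
The Wiener filter is the best linear estimator of `X` from `Y = X + ε`, by the orthogonality
principle: if `Â E[Y Yᵀ] = E[X Yᵀ]`, the residual `Â Y - X` is uncorrelated with `Y`, so for every
`A` the risk splits as `E‖Â Y - X‖² + E‖(A - Â) Y‖²`. Independence and `E ε = 0` give
`E[Y Yᵀ] = Γ_X + Γ_ε` and `E[X Yᵀ] = Γ_X`, and `Γ_X (Γ_X + Γ_ε)† (Γ_X + Γ_ε) = Γ_X` holds because
the kernel of the sum of two positive semidefinite matrices lies in the kernel of each summand.
-/

theorem Matrix.PosSemidef.mul_mul_add_eq {ι : Type*} [Fintype ι] [DecidableEq ι]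
    {P Q G : Matrix ι ι ℝ} (hP : P.PosSemidef) (hQ : Q.PosSemidef)
    (hG : (P + Q) * G * (P + Q) = P + Q) :
    P * G * (P + Q) = P := by
  have hker : ∀ w, (P + Q) *ᵥ w = 0 → P *ᵥ w = 0 := by
    intro w hw
    have hsum : star w ⬝ᵥ P *ᵥ w + star w ⬝ᵥ Q *ᵥ w = 0 := by
      rw [← dotProduct_add, ← add_mulVec, hw, dotProduct_zero]
    refine (hP.dotProduct_mulVec_zero_iff w).mp ?_
    linarith [hP.dotProduct_mulVec_nonneg w, hQ.dotProduct_mulVec_nonneg w]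
  have hPK : P * (1 - G * (P + Q)) = 0 := by
    refine ext_iff_mulVec.mpr fun v => ?_
    have hw : (P + Q) *ᵥ ((1 - G * (P + Q)) *ᵥ v) = 0 := by
      rw [mulVec_mulVec, Matrix.mul_sub, Matrix.mul_one, ← Matrix.mul_assoc, hG, sub_self,
        zero_mulVec]
    rw [← mulVec_mulVec, hker _ hw, zero_mulVec]
  rw [Matrix.mul_sub, Matrix.mul_one, sub_eq_zero] at hPK
  rw [Matrix.mul_assoc, ← hPK]

section SecondMoment

variable {Ω : Type} [MeasurableSpace Ω] {μ : Measure Ω}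

theorem MeasureTheory.MemLp.mulVec {ι κ : Type*} [Fintype ι] [Fintype κ] {p : ENNReal}
    {U : Ω → κ → ℝ} (hU : MemLp U p μ) (A : Matrix ι κ ℝ) :
    MemLp (fun ω => A *ᵥ U ω) p μ :=
  (LinearMap.toContinuousLinearMap (Matrix.mulVecLin A)).comp_memLp' hU

theorem integrable_apply_mul_apply {ι κ : Type*} [Fintype ι] [Fintype κ]
    {U : Ω → ι → ℝ} {V : Ω → κ → ℝ} (hU : MemLp U 2 μ) (hV : MemLp V 2 μ) (i : ι) (j : κ) :
    Integrable (fun ω => U ω i * V ω j) μ :=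
  (hU.eval i).integrable_mul (hV.eval j)

variable {l m n : ℕ}

theorem secondMoment_transpose (U : Ω → Fin m → ℝ) (V : Ω → Fin n → ℝ) :
    (secondMoment μ U V)ᵀ = secondMoment μ V U := by
  ext i j
  simp only [secondMoment, transpose_apply, of_apply, mul_comm]

theorem secondMoment_add_left {U U' : Ω → Fin m → ℝ} {V : Ω → Fin n → ℝ}
    (hU : MemLp U 2 μ) (hU' : MemLp U' 2 μ) (hV : MemLp V 2 μ) :
    secondMoment μ (U + U') V = secondMoment μ U V + secondMoment μ U' V := by
  ext i j
  simp only [secondMoment, of_apply, Matrix.add_apply, Pi.add_apply, add_mul]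
  exact integral_add (integrable_apply_mul_apply hU hV i j)
    (integrable_apply_mul_apply hU' hV i j)

theorem secondMoment_add_right {U : Ω → Fin m → ℝ} {V V' : Ω → Fin n → ℝ}
    (hU : MemLp U 2 μ) (hV : MemLp V 2 μ) (hV' : MemLp V' 2 μ) :
    secondMoment μ U (V + V') = secondMoment μ U V + secondMoment μ U V' := by
  rw [← secondMoment_transpose, secondMoment_add_left hV hV' hU, transpose_add,
    secondMoment_transpose, secondMoment_transpose]

theorem secondMoment_sub_left {U U' : Ω → Fin m → ℝ} {V : Ω → Fin n → ℝ}
    (hU : MemLp U 2 μ) (hU' : MemLp U' 2 μ) (hV : MemLp V 2 μ) :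
    secondMoment μ (U - U') V = secondMoment μ U V - secondMoment μ U' V := by
  ext i j
  simp only [secondMoment, of_apply, Matrix.sub_apply, Pi.sub_apply, sub_mul]
  exact integral_sub (integrable_apply_mul_apply hU hV i j)
    (integrable_apply_mul_apply hU' hV i j)

theorem secondMoment_mulVec_left {U : Ω → Fin m → ℝ} {V : Ω → Fin n → ℝ}
    (hU : MemLp U 2 μ) (hV : MemLp V 2 μ) (A : Matrix (Fin l) (Fin m) ℝ) :
    secondMoment μ (fun ω => A *ᵥ U ω) V = A * secondMoment μ U V := by
  ext i j
  simp only [secondMoment, of_apply, mul_apply, mulVec, dotProduct, Finset.sum_mul, mul_assoc]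
  rw [integral_finsetSum _ fun k _ => (integrable_apply_mul_apply hU hV k j).const_mul _]
  simp only [integral_const_mul]

theorem secondMoment_mulVec_right {U : Ω → Fin m → ℝ} {V : Ω → Fin n → ℝ}
    (hU : MemLp U 2 μ) (hV : MemLp V 2 μ) (B : Matrix (Fin l) (Fin n) ℝ) :
    secondMoment μ U (fun ω => B *ᵥ V ω) = secondMoment μ U V * Bᵀ := by
  rw [← secondMoment_transpose, secondMoment_mulVec_left hV hU, transpose_mul,
    secondMoment_transpose]

theorem integral_sum_sq_eq_trace_secondMoment {U : Ω → Fin n → ℝ} (hU : MemLp U 2 μ) :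
    ∫ ω, ∑ i, U ω i ^ 2 ∂μ = trace (secondMoment μ U U) := by
  simp only [trace, diag, secondMoment, of_apply, sq]
  exact integral_finsetSum _ fun i _ => integrable_apply_mul_apply hU hU i i

theorem posSemidef_secondMoment {U : Ω → Fin n → ℝ} (hU : MemLp U 2 μ) :
    (secondMoment μ U U).PosSemidef := by
  refine .of_dotProduct_mulVec_nonneg ?_ fun x => ?_
  · exact (conjTranspose_eq_transpose_of_trivial _).trans (secondMoment_transpose U U)
  · set r := replicateRow (Fin 1) x
    have hr : secondMoment μ (fun ω => r *ᵥ U ω) (fun ω => r *ᵥ U ω)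
        = r * secondMoment μ U U * rᵀ := by
      rw [secondMoment_mulVec_left hU (hU.mulVec r), secondMoment_mulVec_right hU hU,
        Matrix.mul_assoc]
    calc 0 ≤ ∫ ω, (r *ᵥ U ω) 0 * (r *ᵥ U ω) 0 ∂μ :=
          integral_nonneg fun ω => mul_self_nonneg _
      _ = (r * secondMoment μ U U * rᵀ) 0 0 := congrFun (congrFun hr 0) 0
      _ = star x ⬝ᵥ secondMoment μ U U *ᵥ x := by
        simp only [r, transpose_replicateRow, mul_apply, replicateRow_apply, replicateCol_apply,
          Finset.sum_mul, mul_assoc, dotProduct, Pi.star_apply, star_trivial, mulVec,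
          Finset.mul_sum]
        exact Finset.sum_comm

theorem secondMoment_eq_zero_of_indepFun {U : Ω → Fin m → ℝ} {V : Ω → Fin n → ℝ}
    (hUV : ProbabilityTheory.IndepFun U V μ) (hU : AEStronglyMeasurable U μ)
    (hV : Integrable V μ) (hV0 : ∫ ω, V ω ∂μ = 0) :
    secondMoment μ U V = 0 := by
  ext i j
  have hUVij := hUV.comp (measurable_pi_apply i) (measurable_pi_apply j)
  have hij := hUVij.integral_mul_eq_mul_integral
    ((continuous_apply i).comp_aestronglyMeasurable hU) (hV.eval j).aestronglyMeasurable
  simp only [Function.comp_def, Pi.mul_apply] at hij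
  rw [← eval_integral (fun k => hV.eval k), hV0] at hij
  simpa [secondMoment] using hij

noncomputable def quadraticRisk (μ : Measure Ω) (X : Ω → Fin n → ℝ) (Y : Ω → Fin m → ℝ)
    (A : Matrix (Fin n) (Fin m) ℝ) : ℝ :=
  ∫ ω, ∑ i, (A *ᵥ Y ω - X ω) i ^ 2 ∂μ

variable {X : Ω → Fin n → ℝ} {Y : Ω → Fin m → ℝ}

theorem quadraticRisk_eq_trace (hX : MemLp X 2 μ) (hY : MemLp Y 2 μ)
    (A : Matrix (Fin n) (Fin m) ℝ) :
    quadraticRisk μ X Y A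
      = trace (secondMoment μ ((fun ω => A *ᵥ Y ω) - X) ((fun ω => A *ᵥ Y ω) - X)) :=
  integral_sum_sq_eq_trace_secondMoment ((hY.mulVec A).sub hX)

theorem quadraticRisk_eq_add_of_mul_secondMoment_eq (hX : MemLp X 2 μ) (hY : MemLp Y 2 μ)
    {Â : Matrix (Fin n) (Fin m) ℝ} (hÂ : Â * secondMoment μ Y Y = secondMoment μ X Y)
    (A : Matrix (Fin n) (Fin m) ℝ) :
    quadraticRisk μ X Y A = quadraticRisk μ X Y Â +
      trace (secondMoment μ (fun ω => (A - Â) *ᵥ Y ω) (fun ω => (A - Â) *ᵥ Y ω)) := by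
  set D := A - Â
  set R := (fun ω => Â *ᵥ Y ω) - X
  have hR : MemLp R 2 μ := (hY.mulVec Â).sub hX
  have hDY : MemLp (fun ω => D *ᵥ Y ω) 2 μ := hY.mulVec D
  have hRY : secondMoment μ R Y = 0 := by
    rw [secondMoment_sub_left (hY.mulVec Â) hX hY, secondMoment_mulVec_left hY hY, hÂ, sub_self]
  have hsplit : (fun ω => A *ᵥ Y ω) - X = (fun ω => D *ᵥ Y ω) + R := by
    funext ω
    simp only [Pi.add_apply, Pi.sub_apply, D, R, sub_mulVec]
    abel
  rw [quadraticRisk_eq_trace hX hY, quadraticRisk_eq_trace hX hY, hsplit,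
    secondMoment_add_left hDY hR (hDY.add hR), secondMoment_add_right hDY hDY hR,
    secondMoment_add_right hR hDY hR, secondMoment_mulVec_left hY hR,
    secondMoment_mulVec_right hR hY, ← secondMoment_transpose R Y, hRY]
  simp only [transpose_zero, Matrix.mul_zero, Matrix.zero_mul, add_zero, zero_add, trace_add]
  ring

theorem quadraticRisk_le_of_mul_secondMoment_eq (hX : MemLp X 2 μ) (hY : MemLp Y 2 μ)
    {Â : Matrix (Fin n) (Fin m) ℝ} (hÂ : Â * secondMoment μ Y Y = secondMoment μ X Y)
    (A : Matrix (Fin n) (Fin m) ℝ) :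
    quadraticRisk μ X Y Â ≤ quadraticRisk μ X Y A := by
  rw [quadraticRisk_eq_add_of_mul_secondMoment_eq hX hY hÂ A]
  exact le_add_of_nonneg_right (posSemidef_secondMoment (hY.mulVec (A - Â))).trace_nonneg

end SecondMoment

/-- The Wiener smoothing matrix `Â = Γ_X (Γ_X + Γ_ε)†` attains the global minimum of
the denoising Bayes risk `E‖A (X + ε) − X‖₂²` over all `A`. -/
theorem wiener_filter_optimal {Ω : Type} [MeasurableSpace Ω]
    (μ : Measure Ω) [IsProbabilityMeasure μ] {n : ℕ}
    (X : Ω → Fin n → ℝ) (ε : Ω → Fin n → ℝ)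
    (hX : MemLp X 2 μ) (hε : MemLp ε 2 μ)
    (hindep : ProbabilityTheory.IndepFun X ε μ)
    (hmean : (∫ ω, ε ω ∂μ) = 0)
    (Gd : Matrix (Fin n) (Fin n) ℝ)
    (hGd : IsMoorePenrose (secondMoment μ X X + secondMoment μ ε ε) Gd) :
    ∀ A : Matrix (Fin n) (Fin n) ℝ,
      ∫ ω, ∑ i, ((secondMoment μ X X * Gd) *ᵥ (X ω + ε ω) - X ω) i ^ 2 ∂μ
        ≤ ∫ ω, ∑ i, (A *ᵥ (X ω + ε ω) - X ω) i ^ 2 ∂μ := by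
  have hXε : secondMoment μ X ε = 0 := secondMoment_eq_zero_of_indepFun hindep
    hX.aestronglyMeasurable (hε.integrable one_le_two) hmean
  have hYY : secondMoment μ (X + ε) (X + ε) = secondMoment μ X X + secondMoment μ ε ε := by
    rw [secondMoment_add_left hX hε (hX.add hε), secondMoment_add_right hX hX hε,
      secondMoment_add_right hε hX hε, ← secondMoment_transpose X ε, hXε, transpose_zero,
      add_zero, zero_add]
  have hXY : secondMoment μ X (X + ε) = secondMoment μ X X := by
    rw [secondMoment_add_right hX hX hε, hXε, add_zero]
  refine quadraticRisk_le_of_mul_secondMoment_eq hX (hX.add hε) ?_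
  rw [hYY, hXY]
  exact (posSemidef_secondMoment hX).mul_mul_add_eq (posSemidef_secondMoment hε) hGd.1
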